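/- arXiv:1205.1455 — 2 statements merged into one kernel-verified Lean document; each statement's English description precedes it below -/
import Mathlib

section
/- Let R = ℚ[x₁,…,x_n] and let P₁,…,P_n ∈ R be polynomials with no constant or linear terms such that M = R/(P₁,…,P_n) has finite length. Then dim_ℚ M ≥ 1 + n + (C(n+1,2) − n) = n(n+1)/2 + 1, and in particular dim_ℚ M ≥ 2n. -/
/-!
Let `I = (P₁, …, Pₙ)` and let `T` be truncation to total degree `≤ 2`. Since each `Pⱼ` vanishes in
degrees `0` and `1`, `T (g * Pⱼ) = g(0) • T Pⱼ`, so `T` maps `I` into the span of the `n`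
quadrics `T Pⱼ`. As `T` is the identity on polynomials of degree `≤ 2`, the kernel of the
quotient map restricted to that space of dimension `1 + n + n(n+1)/2` has dimension at most `n`.
-/

open Module

theorem Finsupp.degree_eq_one_iff {σ : Type*} {d : σ →₀ ℕ} :
    d.degree = 1 ↔ ∃ i, d = single i 1 := by
  classical
  refine ⟨fun h => ?_, fun ⟨i, hi⟩ => hi ▸ degree_single i 1⟩
  obtain ⟨i, hi⟩ := Multiset.card_eq_one.1 ((card_toMultiset d).trans h)
  exact ⟨i, by rw [← toMultiset_toFinsupp d, hi, Multiset.toFinsupp_singleton]⟩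

theorem Finsupp.natCard_degree_le {σ : Type*} [Finite σ] (m : ℕ) :
    Nat.card {d : σ →₀ ℕ // d.degree ≤ m} =
      ∑ k ∈ Finset.range (m + 1), (Nat.card σ).multichoose k := by
  classical
  let deg : {d : σ →₀ ℕ // d.degree ≤ m} → Fin (m + 1) := fun d => ⟨d.1.degree, by omega⟩
  have fiber (k : Fin (m + 1)) : {d // deg d = k} ≃ Sym σ k :=
    { toFun := fun d => (Sym.equivNatSum σ k).symm ⟨d.1.1, congrArg Fin.val d.2⟩
      invFun := fun s => ⟨⟨Sym.equivNatSum σ k s,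
        (Sym.equivNatSum σ k s).2.trans_le (Nat.le_of_lt_succ k.2)⟩,
        Fin.ext (Sym.equivNatSum σ k s).2⟩
      left_inv := fun d => by simp
      right_inv := (Sym.equivNatSum σ k).symm_apply_apply }
  have (k : Fin (m + 1)) : Finite {d // deg d = k} := .of_equiv _ (fiber k).symm
  rw [← Nat.card_congr (Equiv.sigmaFiberEquiv deg), Nat.card_sigma, ← Fin.sum_univ_eq_sum_range]
  simp [Nat.card_congr (fiber _), Sym.natCard_sym_eq_multichoose]

namespace MvPolynomial

section Truncation

variable {σ R : Type*} [CommSemiring R]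

noncomputable def truncTotalDegree (m : ℕ) : MvPolynomial σ R →ₗ[R] MvPolynomial σ R :=
  ∑ k ∈ Finset.range (m + 1), homogeneousComponent k

variable {m : ℕ}

theorem coeff_truncTotalDegree (d : σ →₀ ℕ) (f : MvPolynomial σ R) :
    coeff d (truncTotalDegree m f) = if d.degree ≤ m then coeff d f else 0 := by
  simp [truncTotalDegree, coeff_sum, coeff_homogeneousComponent]

theorem truncTotalDegree_of_mem_restrictTotalDegree {f : MvPolynomial σ R}
    (hf : f ∈ restrictTotalDegree σ R m) : truncTotalDegree m f = f := by
  ext d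
  rw [coeff_truncTotalDegree, ite_eq_left_iff, eq_comm, ← notMem_support_iff]
  exact fun hd hmem => hd <| (le_totalDegree hmem).trans <| (mem_restrictTotalDegree σ m f).1 hf

theorem truncTotalDegree_mul_of_coeff_eq_zero {f : MvPolynomial σ R}
    (hf : ∀ d : σ →₀ ℕ, d.degree < m → coeff d f = 0) (g : MvPolynomial σ R) :
    truncTotalDegree m (g * f) = constantCoeff g • truncTotalDegree m f := by
  classical
  ext d
  rw [coeff_smul, coeff_truncTotalDegree, coeff_truncTotalDegree]
  split_ifs with hd
  · rw [coeff_mul, Finset.sum_eq_single ((0 : σ →₀ ℕ), d), constantCoeff_eq, smul_eq_mul]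
    · rintro ⟨a, b⟩ hab hne
      dsimp only
      rw [Finset.HasAntidiagonal.mem_antidiagonal] at hab
      have ha : a ≠ 0 := by rintro rfl; exact hne (by simp [← hab])
      have hsum : a.degree + b.degree = d.degree := by rw [← map_add, hab]
      have ha' : a.degree ≠ 0 := (Finsupp.degree_eq_zero_iff a).not.2 ha
      rw [hf b (by omega), mul_zero]
    · simp
  · rw [smul_zero]

theorem truncTotalDegree_mem_span_of_mem_ideal_span {ι : Type*} [Fintype ι]
    {P : ι → MvPolynomial σ R} (hP : ∀ j, ∀ d : σ →₀ ℕ, d.degree < m → coeff d (P j) = 0)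
    {f : MvPolynomial σ R} (hf : f ∈ Ideal.span (Set.range P)) :
    truncTotalDegree m f ∈ Submodule.span R (Set.range (truncTotalDegree m ∘ P)) := by
  obtain ⟨g, rfl⟩ := Ideal.mem_span_range_iff_exists_fun.1 hf
  simp only [map_sum, truncTotalDegree_mul_of_coeff_eq_zero (hP _)]
  exact Submodule.sum_mem _ fun j _ => Submodule.smul_mem _ _ (Submodule.subset_span ⟨j, rfl⟩)

end Truncation

section Dimension

variable {σ K : Type*} [Field K] [Finite σ]

theorem finrank_restrictTotalDegree (m : ℕ) :
    finrank K (restrictTotalDegree σ K m) =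
      ∑ k ∈ Finset.range (m + 1), (Nat.card σ).multichoose k :=
  (finrank_eq_nat_card_basis (basisRestrictSupport K _)).trans (Finsupp.natCard_degree_le m)

theorem finrank_restrictTotalDegree_le_finrank_quotient_add_card {ι : Type*} [Fintype ι]
    {m : ℕ} {P : ι → MvPolynomial σ K}
    (hP : ∀ j, ∀ d : σ →₀ ℕ, d.degree < m → coeff d (P j) = 0)
    [FiniteDimensional K (MvPolynomial σ K ⧸ Ideal.span (Set.range P))] :
    finrank K (restrictTotalDegree σ K m) ≤
      finrank K (MvPolynomial σ K ⧸ Ideal.span (Set.range P)) + Fintype.card ι := by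
  set V := restrictTotalDegree σ K m
  set U := Submodule.span K (Set.range (truncTotalDegree m ∘ P))
  have : FiniteDimensional K U := .span_of_finite K (Set.finite_range _)
  let q := (Ideal.Quotient.mkₐ K (Ideal.span (Set.range P))).toLinearMap.domRestrict V
  have hker : (LinearMap.ker q).map V.subtype ≤ U := by
    rintro _ ⟨⟨f, hfV⟩, hf, rfl⟩
    change f ∈ U
    rw [← truncTotalDegree_of_mem_restrictTotalDegree hfV]
    exact truncTotalDegree_mem_span_of_mem_ideal_span hP (Ideal.Quotient.eq_zero_iff_mem.1 hf)
  calc finrank K V = finrank K (LinearMap.range q) + finrank K (LinearMap.ker q) :=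
        (LinearMap.finrank_range_add_finrank_ker q).symm
    _ ≤ finrank K (MvPolynomial σ K ⧸ Ideal.span (Set.range P)) + finrank K U := by
        gcongr
        · exact Submodule.finrank_le _
        · exact (V.finrank_map_subtype_eq _).symm.trans_le (Submodule.finrank_mono hker)
    _ ≤ _ := by gcongr; exact finrank_range_le_card _

end Dimension

end MvPolynomial

theorem Nat.two_mul_le_mul_succ_div_two_add_one (n : ℕ) : 2 * n ≤ n * (n + 1) / 2 + 1 := by
  have h : n * (n + 1) / 2 * 2 = n * (n + 1) :=
    Nat.div_mul_cancel (Nat.even_mul_succ_self n).two_dvd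
  rcases le_or_gt n 2 with hn | hn
  · interval_cases n <;> omega
  · nlinarith

open MvPolynomial

/-- Let `R = ℚ[x₁,…,xₙ]` and let `P₁,…,Pₙ ∈ R` be polynomials with no constant or linear
terms such that `M = R/(P₁,…,Pₙ)` has finite length (equivalently, is finite-dimensional
over `ℚ`). Then `dim_ℚ M ≥ n(n+1)/2 + 1 = 1 + n + (C(n+1,2) − n)`, and in particular
`dim_ℚ M ≥ 2n`. -/
theorem stmt_8 (n : ℕ) (P : Fin n → MvPolynomial (Fin n) ℚ)
    (hconst : ∀ j, MvPolynomial.constantCoeff (P j) = 0)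
    (hlin : ∀ j (i : Fin n), MvPolynomial.coeff (Finsupp.single i 1) (P j) = 0)
    (hfl : FiniteDimensional ℚ (MvPolynomial (Fin n) ℚ ⧸ Ideal.span (Set.range P))) :
    Module.finrank ℚ (MvPolynomial (Fin n) ℚ ⧸ Ideal.span (Set.range P)) ≥ n * (n + 1) / 2 + 1 ∧
    Module.finrank ℚ (MvPolynomial (Fin n) ℚ ⧸ Ideal.span (Set.range P)) ≥ 2 * n := by
  have hP : ∀ j, ∀ d : Fin n →₀ ℕ, d.degree < 2 → coeff d (P j) = 0 := by
    intro j d hd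
    obtain h0 | h1 : d.degree = 0 ∨ d.degree = 1 := by omega
    · rw [(Finsupp.degree_eq_zero_iff d).1 h0, ← hconst j, constantCoeff_eq]
    · obtain ⟨i, rfl⟩ := Finsupp.degree_eq_one_iff.1 h1
      exact hlin j i
  have hquad : Nat.multichoose n 2 = n * (n + 1) / 2 := by
    rw [Nat.multichoose_eq, Nat.choose_two_right, Nat.mul_comm]; rfl
  have key := finrank_restrictTotalDegree_le_finrank_quotient_add_card hP
  simp only [finrank_restrictTotalDegree, Finset.sum_range_succ, Finset.sum_range_zero,
    Nat.card_eq_fintype_card, Fintype.card_fin, Nat.multichoose_zero_right,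
    Nat.multichoose_one_right, hquad] at key
  have := Nat.two_mul_le_mul_succ_div_two_add_one n
  constructor <;> omega
end

section
/- Let (V, d) be a finite-dimensional cochain complex of ℚ-vector spaces and let D be a differential on V ⊗ ℚ[t] that is ℚ[t]-linear, specializing to d at t = 0 and to d_ξ at t = ξ. Then for all but finitely many ξ ∈ ℚ, dim_ℚ H(V, d_ξ) ≤ dim_ℚ H(V, d). -/
/-! The homology dimension of `d_ξ` is `m - 2 rank d_ξ`, so it suffices that
`rank d_ξ ≥ rank d_0` for almost all `ξ`. If `rank d_0 = r`, some `r × r` minor of `d_0` is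
nonzero; the same minor of `D` is a polynomial in `t` that is nonzero at `0`, hence has finitely
many roots, and wherever it does not vanish `rank d_ξ ≥ r`. -/

open Polynomial

namespace Matrix

variable {K : Type*} [Field K] {m n : Type*} [Fintype m] [Fintype n]

theorem exists_submatrix_cols_rank_eq (A : Matrix m n K) {r : ℕ} (hr : A.rank = r) :
    ∃ g : Fin r → n, (A.submatrix id g).rank = r := by
  obtain ⟨κ, a, -, hspan, hli⟩ := exists_linearIndependent' K A.col
  have : Finite κ := hli.finite
  have : Fintype κ := Fintype.ofFinite κ
  have hcard : Fintype.card κ = r := by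
    rw [linearIndependent_iff_card_eq_finrank_span.mp hli, Set.finrank, hspan,
      ← rank_eq_finrank_span_cols, hr]
  let e := (Fintype.equivFinOfCardEq hcard).symm
  refine ⟨a ∘ e, ?_⟩
  rw [rank_eq_finrank_span_cols]
  exact (finrank_span_eq_card (hli.comp e e.injective)).trans (Fintype.card_fin r)

theorem det_ne_zero_of_rank_eq_card [DecidableEq n] {A : Matrix n n K}
    (h : A.rank = Fintype.card n) : A.det ≠ 0 := by
  have hrange : LinearMap.range A.mulVecLin = ⊤ :=
    Submodule.eq_top_of_finrank_eq (h.trans (Module.finrank_fintype_fun_eq_card K).symm)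
  have hunit : IsUnit A := mulVec_surjective_iff_isUnit.mp (LinearMap.range_eq_top.mp hrange)
  exact ((isUnit_iff_isUnit_det A).mp hunit).ne_zero

theorem exists_submatrix_det_ne_zero (A : Matrix m n K) :
    ∃ (f : Fin A.rank → m) (g : Fin A.rank → n), (A.submatrix f g).det ≠ 0 := by
  obtain ⟨g, hg⟩ := A.exists_submatrix_cols_rank_eq rfl
  obtain ⟨f, hf⟩ := (A.submatrix id g)ᵀ.exists_submatrix_cols_rank_eq (by rw [rank_transpose, hg])
  refine ⟨f, g, ?_⟩
  rw [← det_transpose]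
  exact det_ne_zero_of_rank_eq_card (hf.trans (Fintype.card_fin _).symm)

theorem finite_setOf_rank_map_eval_lt (A : Matrix m n K[X]) (ξ₀ : K) :
    {ξ | (A.map (eval ξ)).rank < (A.map (eval ξ₀)).rank}.Finite := by
  obtain ⟨f, g, hminor₀⟩ := (A.map (eval ξ₀)).exists_submatrix_det_ne_zero
  set p := (A.submatrix f g).det
  have hp : ∀ ξ, p.eval ξ = ((A.map (eval ξ)).submatrix f g).det :=
    fun ξ => RingHom.map_det (evalRingHom ξ) _
  have hp₀ : p ≠ 0 := fun h => hminor₀ (by rw [← hp, h, eval_zero])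
  refine (finite_setOfPred_isRoot hp₀).subset fun ξ hlt => ?_
  by_contra hroot
  rw [Set.mem_ofPred_eq, IsRoot.def, hp] at hroot
  have hrank := rank_of_det_ne_zero hroot
  rw [Fintype.card_fin] at hrank
  exact (rank_submatrix_le _ f g).not_gt (hrank ▸ hlt)

theorem finrank_ker_sub_finrank_range_toLin'_le [DecidableEq n] {M N : Matrix n n K}
    (h : N.rank ≤ M.rank) :
    Module.finrank K (LinearMap.ker (toLin' M)) - Module.finrank K (LinearMap.range (toLin' M)) ≤
      Module.finrank K (LinearMap.ker (toLin' N)) -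
        Module.finrank K (LinearMap.range (toLin' N)) := by
  have hM := LinearMap.finrank_range_add_finrank_ker (toLin' M)
  have hN := LinearMap.finrank_range_add_finrank_ker (toLin' N)
  have hrM : Module.finrank K (LinearMap.range (toLin' M)) = M.rank := rfl
  have hrN : Module.finrank K (LinearMap.range (toLin' N)) = N.rank := rfl
  omega

end Matrix

theorem stmt_16_general (m : ℕ) (D : Matrix (Fin m) (Fin m) (Polynomial ℚ)) :
    {ξ : ℚ | ¬ (Module.finrank ℚ (LinearMap.ker (Matrix.toLin' (D.map (eval ξ)))) -
        Module.finrank ℚ (LinearMap.range (Matrix.toLin' (D.map (eval ξ)))) ≤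
      Module.finrank ℚ (LinearMap.ker (Matrix.toLin' (D.map (eval (0 : ℚ))))) -
        Module.finrank ℚ (LinearMap.range (Matrix.toLin' (D.map (eval (0 : ℚ))))))}.Finite :=
  (D.finite_setOf_rank_map_eval_lt 0).subset fun _ hξ =>
    not_le.mp fun hle => hξ (Matrix.finrank_ker_sub_finrank_range_toLin'_le hle)

/-- Let `(V, d)` be a finite-dimensional (co)chain complex of `ℚ`-vector spaces, presented by a
square-zero matrix `D` over `ℚ[t]` acting on `V ⊗ ℚ[t] ≅ ℚ[t]^m`, i.e. a `ℚ[t]`-linear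
differential; its specialization at `t = ξ` is the matrix `D.map (eval ξ)`, with homology
dimension `dim ker d_ξ − dim im d_ξ`. Then for all but finitely many `ξ ∈ ℚ`,
`dim_ℚ H(V, d_ξ) ≤ dim_ℚ H(V, d₀)`. -/
theorem stmt_16 (m : ℕ) (D : Matrix (Fin m) (Fin m) (Polynomial ℚ))
    (hD : D * D = 0) :
    {ξ : ℚ | ¬ (Module.finrank ℚ (LinearMap.ker (Matrix.toLin' (D.map (eval ξ)))) -
        Module.finrank ℚ (LinearMap.range (Matrix.toLin' (D.map (eval ξ)))) ≤
      Module.finrank ℚ (LinearMap.ker (Matrix.toLin' (D.map (eval (0 : ℚ))))) -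
        Module.finrank ℚ (LinearMap.range (Matrix.toLin' (D.map (eval (0 : ℚ))))))}.Finite :=
  stmt_16_general m D
end
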